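/- Let (γ,f₁,f₂) be a pseudo-spherical timelike framed immersion whose curvature has the form (α,ℓ̂,0,n̂), and assume α²(s) ≠ n̂²(s) and f(s) ≠ 0 for all s. If γ has a singular point at s₀ (i.e., α(s₀) = 0), then E(γ)(s₀) = ±(n̂(s₀)ℓ̂(s₀)γ(s₀) + α'(s₀)f₁(s₀)) / √|(α'(s₀))² - ℓ̂²(s₀)n̂²(s₀)|, and E(γ)'(s₀) = 0 if and only if 2ℓ̂(s₀)α'(s₀)n̂'(s₀) + n̂(s₀)(α'(s₀)ℓ̂'(s₀) - ℓ̂(s₀)α''(s₀)) = 0. -/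

import Mathlib

noncomputable section

/-- The index-2 pseudo-scalar product on `ℝ⁴₂`. -/
def pdot (u w : Fin 4 → ℝ) : ℝ :=
  -(u 0 * w 0) - u 1 * w 1 + u 2 * w 2 + u 3 * w 3

/-- 3×3 determinant. -/
def det3 (a b c d e f g h i : ℝ) : ℝ :=
  a * (e * i - f * h) - b * (d * i - f * g) + c * (d * h - e * g)

/-- The triple product `u×v×w` in `ℝ⁴₂`. -/
def tripleProd (u v w : Fin 4 → ℝ) : Fin 4 → ℝ :=
  ![ -det3 (u 1) (u 2) (u 3) (v 1) (v 2) (v 3) (w 1) (w 2) (w 3),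
      det3 (u 0) (u 2) (u 3) (v 0) (v 2) (v 3) (w 0) (w 2) (w 3),
      det3 (u 0) (u 1) (u 3) (v 0) (v 1) (v 3) (w 0) (w 1) (w 3),
     -det3 (u 0) (u 1) (u 2) (v 0) (v 1) (v 2) (w 0) (w 1) (w 2)]

/-- `μ(s) = γ(s)×v₁(s)×v₂(s)`. -/
def muOf (γ v₁ v₂ : ℝ → Fin 4 → ℝ) (s : ℝ) : Fin 4 → ℝ :=
  tripleProd (γ s) (v₁ s) (v₂ s)

/-- Pseudo-spherical spacelike framed curve on the open interval `I`. -/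
structure SpacelikeFramed (I : Set ℝ) (γ v₁ v₂ : ℝ → Fin 4 → ℝ) (ε : ℝ) : Prop where
  smooth_γ : ContDiffOn ℝ (⊤ : ℕ∞) γ I
  smooth_v₁ : ContDiffOn ℝ (⊤ : ℕ∞) v₁ I
  smooth_v₂ : ContDiffOn ℝ (⊤ : ℕ∞) v₂ I
  eps : ε = 1 ∨ ε = -1
  ads : ∀ s ∈ I, pdot (γ s) (γ s) = -1
  normv₁ : ∀ s ∈ I, pdot (v₁ s) (v₁ s) = ε
  normv₂ : ∀ s ∈ I, pdot (v₂ s) (v₂ s) = -ε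
  orth₁ : ∀ s ∈ I, pdot (γ s) (v₁ s) = 0
  orth₂ : ∀ s ∈ I, pdot (γ s) (v₂ s) = 0
  orth₃ : ∀ s ∈ I, pdot (v₁ s) (v₂ s) = 0
  tangent₁ : ∀ s ∈ I, pdot (deriv γ s) (v₁ s) = 0
  tangent₂ : ∀ s ∈ I, pdot (deriv γ s) (v₂ s) = 0

def scurvA (γ v₁ v₂ : ℝ → Fin 4 → ℝ) (s : ℝ) : ℝ := pdot (deriv γ s) (muOf γ v₁ v₂ s)
def scurvL (ε : ℝ) (v₁ v₂ : ℝ → Fin 4 → ℝ) (s : ℝ) : ℝ := -ε * pdot (deriv v₁ s) (v₂ s)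
def scurvM (γ v₁ v₂ : ℝ → Fin 4 → ℝ) (s : ℝ) : ℝ := pdot (deriv v₁ s) (muOf γ v₁ v₂ s)
def scurvN (γ v₁ v₂ : ℝ → Fin 4 → ℝ) (s : ℝ) : ℝ := pdot (deriv v₂ s) (muOf γ v₁ v₂ s)

/-- Pseudo-spherical timelike framed curve on the open interval `I`. -/
structure TimelikeFramed (I : Set ℝ) (γ v₁ v₂ : ℝ → Fin 4 → ℝ) : Prop where
  smooth_γ : ContDiffOn ℝ (⊤ : ℕ∞) γ I
  smooth_v₁ : ContDiffOn ℝ (⊤ : ℕ∞) v₁ I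
  smooth_v₂ : ContDiffOn ℝ (⊤ : ℕ∞) v₂ I
  ads : ∀ s ∈ I, pdot (γ s) (γ s) = -1
  normv₁ : ∀ s ∈ I, pdot (v₁ s) (v₁ s) = 1
  normv₂ : ∀ s ∈ I, pdot (v₂ s) (v₂ s) = 1
  orth₁ : ∀ s ∈ I, pdot (γ s) (v₁ s) = 0
  orth₂ : ∀ s ∈ I, pdot (γ s) (v₂ s) = 0
  orth₃ : ∀ s ∈ I, pdot (v₁ s) (v₂ s) = 0
  tangent₁ : ∀ s ∈ I, pdot (deriv γ s) (v₁ s) = 0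
  tangent₂ : ∀ s ∈ I, pdot (deriv γ s) (v₂ s) = 0

def tcurvA (γ v₁ v₂ : ℝ → Fin 4 → ℝ) (s : ℝ) : ℝ := -pdot (deriv γ s) (muOf γ v₁ v₂ s)
def tcurvL (v₁ v₂ : ℝ → Fin 4 → ℝ) (s : ℝ) : ℝ := pdot (deriv v₁ s) (v₂ s)
def tcurvM (γ v₁ v₂ : ℝ → Fin 4 → ℝ) (s : ℝ) : ℝ := -pdot (deriv v₁ s) (muOf γ v₁ v₂ s)
def tcurvN (γ v₁ v₂ : ℝ → Fin 4 → ℝ) (s : ℝ) : ℝ := -pdot (deriv v₂ s) (muOf γ v₁ v₂ s)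

/-- `g(s)` for the spacelike total evolute. -/
def sG (α ℓh nh : ℝ → ℝ) (εh : ℝ) (s : ℝ) : ℝ :=
  εh * (α s * deriv nh s - nh s * deriv α s) ^ 2
    - (ℓh s) ^ 2 * (nh s) ^ 2 * ((nh s) ^ 2 + εh * (α s) ^ 2)

/-- Total evolute (with the `+` sign) of a spacelike framed immersion with curvature
`(α, ℓ̂, 0, n̂)`. -/
def sEvolute (γ f₁ f₂ : ℝ → Fin 4 → ℝ) (α ℓh nh : ℝ → ℝ) (εh : ℝ) (s : ℝ) : Fin 4 → ℝ :=
  (Real.sqrt |sG α ℓh nh εh s|)⁻¹ •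
    ((ℓh s * nh s) • (nh s • γ s - α s • f₂ s)
      - (α s * deriv nh s - nh s * deriv α s) • f₁ s)

/-- `f(s)` for the timelike total evolute. -/
def tF (α ℓh nh : ℝ → ℝ) (s : ℝ) : ℝ :=
  (α s * deriv nh s - nh s * deriv α s) ^ 2
    - (ℓh s) ^ 2 * (nh s) ^ 2 * ((nh s) ^ 2 - (α s) ^ 2)

/-- Total evolute (with the `+` sign) of a timelike framed immersion with curvature
`(α, ℓ̂, 0, n̂)`. -/
def tEvolute (γ f₁ f₂ : ℝ → Fin 4 → ℝ) (α ℓh nh : ℝ → ℝ) (s : ℝ) : Fin 4 → ℝ :=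
  (Real.sqrt |tF α ℓh nh s|)⁻¹ •
    ((ℓh s * nh s) • (nh s • γ s - α s • f₂ s)
      - (α s * deriv nh s - nh s * deriv α s) • f₁ s)


section AuxLemmas

open Matrix

lemma pdot_comm (u w : Fin 4 → ℝ) : pdot u w = pdot w u := by unfold pdot; ring

lemma pdot_tripleProd_left (u v w : Fin 4 → ℝ) : pdot (tripleProd u v w) u = 0 := by
  simp only [pdot, tripleProd, det3, Matrix.cons_val_zero, Matrix.cons_val_one,
    Matrix.head_cons, Matrix.cons_val_two, Matrix.tail_cons, Matrix.cons_val_three]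
  ring

lemma pdot_tripleProd_mid (u v w : Fin 4 → ℝ) : pdot (tripleProd u v w) v = 0 := by
  simp only [pdot, tripleProd, det3, Matrix.cons_val_zero, Matrix.cons_val_one,
    Matrix.head_cons, Matrix.cons_val_two, Matrix.tail_cons, Matrix.cons_val_three]
  ring

lemma pdot_tripleProd_right (u v w : Fin 4 → ℝ) : pdot (tripleProd u v w) w = 0 := by
  simp only [pdot, tripleProd, det3, Matrix.cons_val_zero, Matrix.cons_val_one,
    Matrix.head_cons, Matrix.cons_val_two, Matrix.tail_cons, Matrix.cons_val_three]
  ring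

set_option maxHeartbeats 1000000 in
lemma pdot_tripleProd_self (u v w : Fin 4 → ℝ) :
    pdot (tripleProd u v w) (tripleProd u v w) =
      det3 (pdot u u) (pdot u v) (pdot u w) (pdot v u) (pdot v v) (pdot v w)
        (pdot w u) (pdot w v) (pdot w w) := by
  simp only [pdot, tripleProd, det3, Matrix.cons_val_zero, Matrix.cons_val_one,
    Matrix.head_cons, Matrix.cons_val_two, Matrix.tail_cons, Matrix.cons_val_three]
  ring

set_option maxHeartbeats 1000000 in
lemma aux_orth_eq_zero (g f₁ f₂ y : Fin 4 → ℝ)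
    (hgg : pdot g g = -1) (h11 : pdot f₁ f₁ = 1) (h22 : pdot f₂ f₂ = 1)
    (hg1 : pdot g f₁ = 0) (hg2 : pdot g f₂ = 0) (h12 : pdot f₁ f₂ = 0)
    (hy0 : pdot y g = 0) (hy1 : pdot y f₁ = 0) (hy2 : pdot y f₂ = 0)
    (hy3 : pdot y (tripleProd g f₁ f₂) = 0) : y = 0 := by
  have hμμ : pdot (tripleProd g f₁ f₂) (tripleProd g f₁ f₂) = -1 := by
    rw [pdot_tripleProd_self, hgg, hg1, hg2, h11, h12, h22]
    have e1 : pdot f₁ g = 0 := by rw [pdot_comm]; exact hg1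
    have e2 : pdot f₂ g = 0 := by rw [pdot_comm]; exact hg2
    have e3 : pdot f₂ f₁ = 0 := by rw [pdot_comm]; exact h12
    rw [e1, e2, e3]; norm_num [det3]
  set μ := tripleProd g f₁ f₂ with hμdef
  have hμg : pdot μ g = 0 := pdot_tripleProd_left g f₁ f₂
  have hμ1 : pdot μ f₁ = 0 := pdot_tripleProd_mid g f₁ f₂
  have hμ2 : pdot μ f₂ = 0 := pdot_tripleProd_right g f₁ f₂
  clear_value μ
  set η : Matrix (Fin 4) (Fin 4) ℝ :=
    Matrix.of ![![-1,0,0,0], ![0,-1,0,0], ![0,0,1,0], ![0,0,0,1]] with hη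
  set M : Matrix (Fin 4) (Fin 4) ℝ := Matrix.of ![g, f₁, f₂, μ] with hM
  have hηdiag : η = Matrix.diagonal ![-1,-1,1,1] := by
    ext i j
    fin_cases i <;> fin_cases j <;> simp [hη, Matrix.diagonal_apply, Matrix.vecHead, Matrix.vecTail, Function.comp]
  have hdetη : η.det = 1 := by
    rw [hηdiag, Matrix.det_diagonal, Fin.prod_univ_four]; norm_num [Matrix.cons_val_two, Matrix.cons_val_three, Matrix.tail_cons, Matrix.head_cons]
  unfold pdot at hgg h11 h22 hg1 hg2 h12 hμμ hμg hμ1 hμ2 hy0 hy1 hy2 hy3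
  have hN : M * η * M.transpose = Matrix.diagonal ![-1,1,1,-1] := by
    ext i j
    fin_cases i <;> fin_cases j <;>
      · simp only [hM, hη, Matrix.mul_apply, Matrix.transpose_apply, Matrix.of_apply,
          Fin.sum_univ_four, Matrix.cons_val_zero, Matrix.cons_val_one, Matrix.head_cons,
          Matrix.cons_val_two, Matrix.tail_cons, Matrix.cons_val_three,
          Matrix.diagonal_apply]
        norm_num [Fin.ext_iff]
        first
          | linear_combination hgg | linear_combination h11 | linear_combination h22
          | linear_combination hg1 | linear_combination hg2 | linear_combination h12
          | linear_combination hμμ | linear_combination hμg | linear_combination hμ1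
          | linear_combination hμ2
  have hdet2 : M.det * M.det = 1 := by
    have h1 : (M * η * M.transpose).det = 1 := by
      rw [hN, Matrix.det_diagonal, Fin.prod_univ_four]; norm_num [Matrix.cons_val_two, Matrix.cons_val_three, Matrix.tail_cons, Matrix.head_cons]
    rw [Matrix.det_mul, Matrix.det_mul, Matrix.det_transpose, hdetη] at h1
    linarith
  have hunit : IsUnit (M * η) := by
    rw [Matrix.isUnit_iff_isUnit_det, Matrix.det_mul, hdetη, mul_one]
    exact isUnit_iff_ne_zero.2 (by intro h; rw [h] at hdet2; simp at hdet2)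
  have hinj := Matrix.mulVec_injective_iff_isUnit.2 hunit
  have hzero : (M * η).mulVec y = (M * η).mulVec 0 := by
    rw [Matrix.mulVec_zero]
    ext i
    fin_cases i <;>
      · simp [hM, hη, Matrix.mulVec, dotProduct, Matrix.mul_apply,
          Matrix.of_apply, Fin.sum_univ_four, Matrix.cons_val_zero, Matrix.cons_val_one,
          Matrix.head_cons, Matrix.cons_val_two, Matrix.tail_cons, Matrix.cons_val_three,
          Pi.zero_apply]
        first
          | linear_combination hy0 | linear_combination hy1
          | linear_combination hy2 | linear_combination hy3
  exact hinj hzero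

lemma aux_hasDerivAt_pdot {u v : ℝ → Fin 4 → ℝ} {u' v' : Fin 4 → ℝ} {s : ℝ}
    (hu : HasDerivAt u u' s) (hv : HasDerivAt v v' s) :
    HasDerivAt (fun t => pdot (u t) (v t)) (pdot u' (v s) + pdot (u s) v') s := by
  have hu0 := hasDerivAt_pi.1 hu 0
  have hu1 := hasDerivAt_pi.1 hu 1
  have hu2 := hasDerivAt_pi.1 hu 2
  have hu3 := hasDerivAt_pi.1 hu 3
  have hv0 := hasDerivAt_pi.1 hv 0
  have hv1 := hasDerivAt_pi.1 hv 1
  have hv2 := hasDerivAt_pi.1 hv 2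
  have hv3 := hasDerivAt_pi.1 hv 3
  have H := ((((hu0.mul hv0).neg).sub (hu1.mul hv1)).add (hu2.mul hv2)).add (hu3.mul hv3)
  refine H.congr_deriv ?_
  simp only [pdot]; ring

lemma aux_pdot_const {I : Set ℝ} (hI : IsOpen I) {s₀ : ℝ} (hs₀ : s₀ ∈ I)
    {u v : ℝ → Fin 4 → ℝ} {u' v' : Fin 4 → ℝ} {c : ℝ}
    (hu : HasDerivAt u u' s₀) (hv : HasDerivAt v v' s₀)
    (hc : ∀ s ∈ I, pdot (u s) (v s) = c) :
    pdot u' (v s₀) + pdot (u s₀) v' = 0 := by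
  have h1 := aux_hasDerivAt_pdot hu hv
  have h2 : (fun t => pdot (u t) (v t)) =ᶠ[nhds s₀] fun _ => c :=
    Filter.eventually_of_mem (hI.mem_nhds hs₀) hc
  have h3 : HasDerivAt (fun _ : ℝ => c) (pdot u' (v s₀) + pdot (u s₀) v') s₀ :=
    h1.congr_of_eventuallyEq h2.symm
  exact h3.unique (hasDerivAt_const s₀ c)

lemma aux_cd_comp {I : Set ℝ} {u : ℝ → Fin 4 → ℝ} (h : ContDiffOn ℝ (⊤ : ℕ∞) u I) (i : Fin 4) :
    ContDiffOn ℝ (⊤ : ℕ∞) (fun s => u s i) I :=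
  (ContinuousLinearMap.proj i : (Fin 4 → ℝ) →L[ℝ] ℝ).contDiff.comp_contDiffOn h

lemma aux_cd_det3 {I : Set ℝ} {a b c d e f g h i : ℝ → ℝ}
    (ha : ContDiffOn ℝ (⊤ : ℕ∞) a I) (hb : ContDiffOn ℝ (⊤ : ℕ∞) b I) (hc : ContDiffOn ℝ (⊤ : ℕ∞) c I)
    (hd : ContDiffOn ℝ (⊤ : ℕ∞) d I) (he : ContDiffOn ℝ (⊤ : ℕ∞) e I) (hf : ContDiffOn ℝ (⊤ : ℕ∞) f I)
    (hg : ContDiffOn ℝ (⊤ : ℕ∞) g I) (hh : ContDiffOn ℝ (⊤ : ℕ∞) h I) (hi : ContDiffOn ℝ (⊤ : ℕ∞) i I) :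
    ContDiffOn ℝ (⊤ : ℕ∞) (fun s => det3 (a s) (b s) (c s) (d s) (e s) (f s) (g s) (h s) (i s)) I := by
  simp only [det3]
  exact ((ha.mul ((he.mul hi).sub (hf.mul hh))).sub
    (hb.mul ((hd.mul hi).sub (hf.mul hg)))).add (hc.mul ((hd.mul hh).sub (he.mul hg)))

lemma aux_cd_mu {I : Set ℝ} {γ f₁ f₂ : ℝ → Fin 4 → ℝ}
    (hγ : ContDiffOn ℝ (⊤ : ℕ∞) γ I) (h₁ : ContDiffOn ℝ (⊤ : ℕ∞) f₁ I) (h₂ : ContDiffOn ℝ (⊤ : ℕ∞) f₂ I)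
    (i : Fin 4) : ContDiffOn ℝ (⊤ : ℕ∞) (fun s => muOf γ f₁ f₂ s i) I := by
  have cγ := aux_cd_comp hγ
  have c₁ := aux_cd_comp h₁
  have c₂ := aux_cd_comp h₂
  fin_cases i <;>
    simp only [muOf, tripleProd, Matrix.cons_val_zero, Matrix.cons_val_one, Matrix.head_cons,
      Matrix.cons_val_two, Matrix.tail_cons, Matrix.cons_val_three, Fin.isValue]
  · exact (aux_cd_det3 (cγ 1) (cγ 2) (cγ 3) (c₁ 1) (c₁ 2) (c₁ 3) (c₂ 1) (c₂ 2) (c₂ 3)).neg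
  · exact aux_cd_det3 (cγ 0) (cγ 2) (cγ 3) (c₁ 0) (c₁ 2) (c₁ 3) (c₂ 0) (c₂ 2) (c₂ 3)
  · exact aux_cd_det3 (cγ 0) (cγ 1) (cγ 3) (c₁ 0) (c₁ 1) (c₁ 3) (c₂ 0) (c₂ 1) (c₂ 3)
  · exact (aux_cd_det3 (cγ 0) (cγ 1) (cγ 2) (c₁ 0) (c₁ 1) (c₁ 2) (c₂ 0) (c₂ 1) (c₂ 2)).neg

lemma aux_cd_pdot {I : Set ℝ} {u v : ℝ → Fin 4 → ℝ}
    (hu : ∀ i, ContDiffOn ℝ (⊤ : ℕ∞) (fun s => u s i) I)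
    (hv : ∀ i, ContDiffOn ℝ (⊤ : ℕ∞) (fun s => v s i) I) :
    ContDiffOn ℝ (⊤ : ℕ∞) (fun s => pdot (u s) (v s)) I := by
  simp only [pdot]
  exact ((((hu 0).mul (hv 0)).neg.sub ((hu 1).mul (hv 1))).add
    ((hu 2).mul (hv 2))).add ((hu 3).mul (hv 3))

lemma aux_sqrt_abs {g : ℝ → ℝ} {g' x σ : ℝ} (hg : HasDerivAt g g' x)
    (hσ : σ = 1 ∨ σ = -1) (hpos : 0 < σ * g x) :
    HasDerivAt (fun s => Real.sqrt |g s|) (σ * g' / (2 * Real.sqrt |g x|)) x := by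
  have hcont : ContinuousAt (fun s => σ * g s) x := continuousAt_const.mul hg.continuousAt
  have hev : ∀ᶠ s in nhds x, 0 < σ * g s :=
    Filter.eventually_of_mem (hcont.preimage_mem_nhds (Ioi_mem_nhds hpos)) (fun s hs => hs)
  have habs : ∀ {t : ℝ}, 0 < σ * t → |t| = σ * t := by
    intro t ht
    rcases hσ with rfl | rfl
    · rw [one_mul] at ht ⊢; exact abs_of_pos ht
    · have : t < 0 := by nlinarith
      rw [abs_of_neg this]; ring
  have heq : (fun s => Real.sqrt |g s|) =ᶠ[nhds x] fun s => Real.sqrt (σ * g s) := by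
    filter_upwards [hev] with s hs
    rw [habs hs]
  have h1 : HasDerivAt (fun s => σ * g s) (σ * g') x := hg.const_mul σ
  have h2 : HasDerivAt (fun s => Real.sqrt (σ * g s)) (1 / (2 * Real.sqrt (σ * g x)) * (σ * g')) x :=
    (Real.hasDerivAt_sqrt (ne_of_gt hpos)).comp x h1
  rw [show Real.sqrt (σ * g x) = Real.sqrt |g x| by rw [habs hpos]] at h2
  have h3 := h2.congr_of_eventuallyEq heq
  refine h3.congr_deriv ?_; ring

lemma pdot_smul_left (c : ℝ) (u w : Fin 4 → ℝ) : pdot (c • u) w = c * pdot u w := by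
  simp only [pdot, Pi.smul_apply, smul_eq_mul]; ring

lemma pdot_sub_left (u v w : Fin 4 → ℝ) : pdot (u - v) w = pdot u w - pdot v w := by
  simp only [pdot, Pi.sub_apply]; ring

lemma pdot_add_left (u v w : Fin 4 → ℝ) : pdot (u + v) w = pdot u w + pdot v w := by
  simp only [pdot, Pi.add_apply]; ring

lemma aux_transfer {I : Set ℝ} (hI : IsOpen I) {s₀ : ℝ} (hs₀ : s₀ ∈ I)
    {α g : ℝ → ℝ} (hg : ContDiffOn ℝ (⊤ : ℕ∞) g I) (heq : ∀ s ∈ I, α s = g s) :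
    HasDerivAt α (deriv α s₀) s₀ ∧ HasDerivAt (deriv α) (deriv (deriv α) s₀) s₀ := by
  have hev : α =ᶠ[nhds s₀] g := Filter.eventually_of_mem (hI.mem_nhds hs₀) heq
  have hgd : DifferentiableAt ℝ g s₀ :=
    (hg.contDiffAt (hI.mem_nhds hs₀)).differentiableAt (by simp)
  have h1 : DifferentiableAt ℝ α s₀ := hev.differentiableAt_iff.mpr hgd
  have hdev : deriv α =ᶠ[nhds s₀] deriv g :=
    Filter.eventually_of_mem (hI.mem_nhds hs₀)
      (fun s hs => Filter.EventuallyEq.deriv_eq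
        (Filter.eventually_of_mem (hI.mem_nhds hs) heq))
  have hgdcd : ContDiffOn ℝ (⊤ : ℕ∞) (deriv g) I := hg.deriv_of_isOpen hI (by simp)
  have h2 : DifferentiableAt ℝ (deriv α) s₀ :=
    hdev.differentiableAt_iff.mpr
      ((hgdcd.contDiffAt (hI.mem_nhds hs₀)).differentiableAt (by simp))
  exact ⟨h1.hasDerivAt, h2.hasDerivAt⟩

end AuxLemmas

set_option maxHeartbeats 4000000 in
theorem timelike_evolute_at_singular_point_of_curve
    (I : Set ℝ) (hI : IsOpen I) (hIc : I.OrdConnected)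
    (γ f₁ f₂ : ℝ → Fin 4 → ℝ)
    (hfr : TimelikeFramed I γ f₁ f₂)
    (α ℓh nh : ℝ → ℝ)
    (hA : ∀ s ∈ I, α s = tcurvA γ f₁ f₂ s)
    (hL : ∀ s ∈ I, ℓh s = tcurvL f₁ f₂ s)
    (hM0 : ∀ s ∈ I, tcurvM γ f₁ f₂ s = 0)
    (hN : ∀ s ∈ I, nh s = tcurvN γ f₁ f₂ s)
    (himm : ∀ s ∈ I, ¬(α s = 0 ∧ ℓh s = 0 ∧ nh s = 0))
    (hnd : ∀ s ∈ I, (α s) ^ 2 ≠ (nh s) ^ 2)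
    (hf : ∀ s ∈ I, tF α ℓh nh s ≠ 0)
    (s₀ : ℝ) (hs₀ : s₀ ∈ I) (hα0 : α s₀ = 0) :
    (∃ c : ℝ, (c = 1 ∨ c = -1) ∧
      tEvolute γ f₁ f₂ α ℓh nh s₀
        = c • ((Real.sqrt |(deriv α s₀) ^ 2 - (ℓh s₀) ^ 2 * (nh s₀) ^ 2|)⁻¹ •
            ((nh s₀ * ℓh s₀) • γ s₀ + deriv α s₀ • f₁ s₀))) ∧
    (deriv (tEvolute γ f₁ f₂ α ℓh nh) s₀ = 0 ↔
      2 * ℓh s₀ * deriv α s₀ * deriv nh s₀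
        + nh s₀ * (deriv α s₀ * deriv ℓh s₀ - ℓh s₀ * deriv (deriv α) s₀) = 0) := by
  have hmem : I ∈ nhds s₀ := hI.mem_nhds hs₀
  have hγd : HasDerivAt γ (deriv γ s₀) s₀ :=
    ((hfr.smooth_γ.contDiffAt hmem).differentiableAt (by simp)).hasDerivAt
  have hf₁d : HasDerivAt f₁ (deriv f₁ s₀) s₀ :=
    ((hfr.smooth_v₁.contDiffAt hmem).differentiableAt (by simp)).hasDerivAt
  have hf₂d : HasDerivAt f₂ (deriv f₂ s₀) s₀ :=
    ((hfr.smooth_v₂.contDiffAt hmem).differentiableAt (by simp)).hasDerivAt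
  set μ₀ : Fin 4 → ℝ := muOf γ f₁ f₂ s₀ with hμ₀def
  have hgg := hfr.ads s₀ hs₀
  have h11 := hfr.normv₁ s₀ hs₀
  have h22 := hfr.normv₂ s₀ hs₀
  have hg1 := hfr.orth₁ s₀ hs₀
  have hg2 := hfr.orth₂ s₀ hs₀
  have h12 := hfr.orth₃ s₀ hs₀
  have hμg : pdot μ₀ (γ s₀) = 0 := pdot_tripleProd_left _ _ _
  have hμ1 : pdot μ₀ (f₁ s₀) = 0 := pdot_tripleProd_mid _ _ _
  have hμ2 : pdot μ₀ (f₂ s₀) = 0 := pdot_tripleProd_right _ _ _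
  -- derivative of γ vanishes at s₀
  have hdγγ : pdot (deriv γ s₀) (γ s₀) = 0 := by
    have h := aux_pdot_const hI hs₀ hγd hγd hfr.ads
    have hsym := pdot_comm (γ s₀) (deriv γ s₀)
    linarith
  have hdγ1 : pdot (deriv γ s₀) (f₁ s₀) = 0 := hfr.tangent₁ s₀ hs₀
  have hdγ2 : pdot (deriv γ s₀) (f₂ s₀) = 0 := hfr.tangent₂ s₀ hs₀
  have hdγμ : pdot (deriv γ s₀) μ₀ = 0 := by
    have h := hA s₀ hs₀
    rw [hα0] at h
    simp only [tcurvA] at h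
    rw [← hμ₀def] at h
    linarith
  have hdγ0 : deriv γ s₀ = 0 :=
    aux_orth_eq_zero (γ s₀) (f₁ s₀) (f₂ s₀) (deriv γ s₀) hgg h11 h22 hg1 hg2 h12
      hdγγ hdγ1 hdγ2 hdγμ
  have hγd0 : HasDerivAt γ 0 s₀ := hdγ0 ▸ hγd
  -- derivative of f₁ at s₀
  have hd1γ : pdot (deriv f₁ s₀) (γ s₀) = 0 := by
    have h := aux_pdot_const hI hs₀ hγd hf₁d hfr.orth₁
    have hcomm := pdot_comm (γ s₀) (deriv f₁ s₀)
    linarith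
  have hd11 : pdot (deriv f₁ s₀) (f₁ s₀) = 0 := by
    have h := aux_pdot_const hI hs₀ hf₁d hf₁d hfr.normv₁
    have hcomm := pdot_comm (f₁ s₀) (deriv f₁ s₀)
    linarith
  have hd12 : pdot (deriv f₁ s₀) (f₂ s₀) = ℓh s₀ := by
    have h := hL s₀ hs₀
    simp only [tcurvL] at h
    exact h.symm
  have hd1μ : pdot (deriv f₁ s₀) μ₀ = 0 := by
    have h := hM0 s₀ hs₀
    simp only [tcurvM] at h
    rw [← hμ₀def] at h
    linarith
  have hf₂γ : pdot (f₂ s₀) (γ s₀) = 0 := by rw [pdot_comm]; exact hg2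
  have hf₂f₁ : pdot (f₂ s₀) (f₁ s₀) = 0 := by rw [pdot_comm]; exact h12
  have hf₂μ : pdot (f₂ s₀) μ₀ = 0 := by rw [pdot_comm]; exact hμ2
  have hf₁val : deriv f₁ s₀ = ℓh s₀ • f₂ s₀ := by
    have hz := aux_orth_eq_zero (γ s₀) (f₁ s₀) (f₂ s₀) (deriv f₁ s₀ - ℓh s₀ • f₂ s₀)
      hgg h11 h22 hg1 hg2 h12 ?_ ?_ ?_ ?_
    · rwa [sub_eq_zero] at hz
    · rw [pdot_sub_left, pdot_smul_left, hd1γ, hf₂γ]; ring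
    · rw [pdot_sub_left, pdot_smul_left, hd11, hf₂f₁]; ring
    · rw [pdot_sub_left, pdot_smul_left, hd12, h22]; ring
    · show pdot (deriv f₁ s₀ - ℓh s₀ • f₂ s₀) μ₀ = 0
      rw [pdot_sub_left, pdot_smul_left, hd1μ, hf₂μ]; ring
  have hf₁d' : HasDerivAt f₁ (ℓh s₀ • f₂ s₀) s₀ := hf₁val ▸ hf₁d
  -- smoothness of the curvature functions
  have hdγcd : ContDiffOn ℝ (⊤ : ℕ∞) (deriv γ) I := hfr.smooth_γ.deriv_of_isOpen hI (by simp)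
  have hdf₁cd : ContDiffOn ℝ (⊤ : ℕ∞) (deriv f₁) I := hfr.smooth_v₁.deriv_of_isOpen hI (by simp)
  have hdf₂cd : ContDiffOn ℝ (⊤ : ℕ∞) (deriv f₂) I := hfr.smooth_v₂.deriv_of_isOpen hI (by simp)
  have hμcd : ∀ i, ContDiffOn ℝ (⊤ : ℕ∞) (fun s => muOf γ f₁ f₂ s i) I :=
    aux_cd_mu hfr.smooth_γ hfr.smooth_v₁ hfr.smooth_v₂
  have hAcd : ContDiffOn ℝ (⊤ : ℕ∞) (tcurvA γ f₁ f₂) I :=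
    (aux_cd_pdot (fun i => aux_cd_comp hdγcd i) hμcd).neg
  have hLcd : ContDiffOn ℝ (⊤ : ℕ∞) (tcurvL f₁ f₂) I :=
    aux_cd_pdot (fun i => aux_cd_comp hdf₁cd i) (fun i => aux_cd_comp hfr.smooth_v₂ i)
  have hNcd : ContDiffOn ℝ (⊤ : ℕ∞) (tcurvN γ f₁ f₂) I :=
    (aux_cd_pdot (fun i => aux_cd_comp hdf₂cd i) hμcd).neg
  obtain ⟨hαd, hdαd⟩ := aux_transfer hI hs₀ hAcd hA
  obtain ⟨hnd', hdnd⟩ := aux_transfer hI hs₀ hNcd hN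
  obtain ⟨hld, -⟩ := aux_transfer hI hs₀ hLcd hL
  have hn0 : nh s₀ ≠ 0 := by
    intro h
    exact hnd s₀ hs₀ (by rw [hα0, h])
  -- value of tF at s₀
  have hFval : tF α ℓh nh s₀
      = nh s₀ ^ 2 * ((deriv α s₀) ^ 2 - (ℓh s₀) ^ 2 * (nh s₀) ^ 2) := by
    simp only [tF, hα0]; ring
  have hF0 : tF α ℓh nh s₀ ≠ 0 := hf s₀ hs₀
  -- Part 1
  have habsF : |tF α ℓh nh s₀|
      = nh s₀ ^ 2 * |(deriv α s₀) ^ 2 - (ℓh s₀) ^ 2 * (nh s₀) ^ 2| := by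
    rw [hFval, abs_mul, abs_of_nonneg (sq_nonneg _)]
  have hsqrtF : Real.sqrt |tF α ℓh nh s₀|
      = |nh s₀| * Real.sqrt |(deriv α s₀) ^ 2 - (ℓh s₀) ^ 2 * (nh s₀) ^ 2| := by
    rw [habsF, Real.sqrt_mul (sq_nonneg _), Real.sqrt_sq_eq_abs]
  have hEval : tEvolute γ f₁ f₂ α ℓh nh s₀
      = (Real.sqrt |tF α ℓh nh s₀|)⁻¹ •
        (nh s₀ • ((nh s₀ * ℓh s₀) • γ s₀ + deriv α s₀ • f₁ s₀)) := by
    simp only [tEvolute, hα0]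
    congr 1
    module
  have hpart1 : ∃ c : ℝ, (c = 1 ∨ c = -1) ∧
      tEvolute γ f₁ f₂ α ℓh nh s₀
        = c • ((Real.sqrt |(deriv α s₀) ^ 2 - (ℓh s₀) ^ 2 * (nh s₀) ^ 2|)⁻¹ •
            ((nh s₀ * ℓh s₀) • γ s₀ + deriv α s₀ • f₁ s₀)) := by
    have hD0 : Real.sqrt |(deriv α s₀) ^ 2 - (ℓh s₀) ^ 2 * (nh s₀) ^ 2| ≠ 0 := by
      refine ne_of_gt (Real.sqrt_pos.mpr (abs_pos.mpr ?_))
      intro h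
      apply hF0
      rw [hFval, h, mul_zero]
    refine ⟨(if 0 < nh s₀ then 1 else -1 : ℝ), ?_, ?_⟩
    · split_ifs
      · exact Or.inl rfl
      · exact Or.inr rfl
    · rw [hEval, hsqrtF, mul_inv, smul_smul, smul_smul]
      congr 1
      rcases lt_or_gt_of_ne hn0 with h | h
      · rw [if_neg (not_lt.mpr h.le), abs_of_neg h, inv_neg]
        field_simp [hn0, hD0]
      · rw [if_pos h, abs_of_pos h]
        field_simp [hn0, hD0]
  refine ⟨hpart1, ?_⟩
  -- Part 2
  have hAder : HasDerivAt (fun s => α s * deriv nh s - nh s * deriv α s)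
      (deriv α s₀ * deriv nh s₀ + α s₀ * deriv (deriv nh) s₀
        - (deriv nh s₀ * deriv α s₀ + nh s₀ * deriv (deriv α) s₀)) s₀ :=
    (hαd.mul hdnd).sub (hnd'.mul hdαd)
  have hFder : HasDerivAt (tF α ℓh nh)
      (2 * nh s₀ ^ 2 * deriv α s₀ * deriv (deriv α) s₀
        - 2 * ℓh s₀ * deriv ℓh s₀ * nh s₀ ^ 4
        - 4 * ℓh s₀ ^ 2 * nh s₀ ^ 3 * deriv nh s₀) s₀ := by
    have H := (hAder.pow 2).sub
      (((hld.pow 2).mul (hnd'.pow 2)).mul ((hnd'.pow 2).sub (hαd.pow 2)))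
    have hfun : tF α ℓh nh = fun s =>
        (α s * deriv nh s - nh s * deriv α s) ^ 2
          - (ℓh s) ^ 2 * (nh s) ^ 2 * ((nh s) ^ 2 - (α s) ^ 2) := rfl
    rw [hfun]
    refine H.congr_deriv ?_
    simp only [Pi.mul_apply, Pi.pow_apply, Pi.sub_apply]
    rw [hα0]; ring
  obtain ⟨σ, hσ, hσpos⟩ : ∃ σ : ℝ, (σ = 1 ∨ σ = -1) ∧ 0 < σ * tF α ℓh nh s₀ := by
    rcases hF0.lt_or_gt with h | h
    · exact ⟨-1, Or.inr rfl, by nlinarith⟩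
    · exact ⟨1, Or.inl rfl, by nlinarith⟩
  have hsq := aux_sqrt_abs hFder hσ hσpos
  have hPpos : 0 < Real.sqrt |tF α ℓh nh s₀| := Real.sqrt_pos.mpr (abs_pos.mpr hF0)
  have hP0 : Real.sqrt |tF α ℓh nh s₀| ≠ 0 := ne_of_gt hPpos
  have hinv := hsq.inv hP0
  have hWder : HasDerivAt
      (fun s => (ℓh s * nh s) • (nh s • γ s - α s • f₂ s)
        - (α s * deriv nh s - nh s * deriv α s) • f₁ s)
      ((deriv ℓh s₀ * nh s₀ ^ 2 + 2 * ℓh s₀ * nh s₀ * deriv nh s₀) • γ s₀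
        + (nh s₀ * deriv (deriv α) s₀) • f₁ s₀) s₀ := by
    have H := ((hld.mul hnd').smul ((hnd'.smul hγd0).sub (hαd.smul hf₂d))).sub
      (hAder.smul hf₁d')
    refine H.congr_deriv ?_
    simp only [Pi.mul_apply, Pi.sub_apply, Pi.smul_apply']
    rw [hα0]; module
  have hEder := hinv.smul hWder
  have hEfun : tEvolute γ f₁ f₂ α ℓh nh = fun s =>
      (Real.sqrt |tF α ℓh nh s|)⁻¹ •
        ((ℓh s * nh s) • (nh s • γ s - α s • f₂ s)
          - (α s * deriv nh s - nh s * deriv α s) • f₁ s) := rfl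
  have hW₀ : (ℓh s₀ * nh s₀) • (nh s₀ • γ s₀ - α s₀ • f₂ s₀)
      - (α s₀ * deriv nh s₀ - nh s₀ * deriv α s₀) • f₁ s₀
      = (ℓh s₀ * nh s₀ ^ 2) • γ s₀ + (nh s₀ * deriv α s₀) • f₁ s₀ := by
    rw [hα0]; module
  set P := Real.sqrt |tF α ℓh nh s₀| with hPdef
  set F' := 2 * nh s₀ ^ 2 * deriv α s₀ * deriv (deriv α) s₀
      - 2 * ℓh s₀ * deriv ℓh s₀ * nh s₀ ^ 4
      - 4 * ℓh s₀ ^ 2 * nh s₀ ^ 3 * deriv nh s₀ with hF'def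
  have hE' : deriv (tEvolute γ f₁ f₂ α ℓh nh) s₀ =
      (P⁻¹ * (deriv ℓh s₀ * nh s₀ ^ 2 + 2 * ℓh s₀ * nh s₀ * deriv nh s₀)
        + -(σ * F' / (2 * P)) / P ^ 2 * (ℓh s₀ * nh s₀ ^ 2)) • γ s₀
      + (P⁻¹ * (nh s₀ * deriv (deriv α) s₀)
        + -(σ * F' / (2 * P)) / P ^ 2 * (nh s₀ * deriv α s₀)) • f₁ s₀ := by
    rw [show deriv (tEvolute γ f₁ f₂ α ℓh nh) s₀ = _ from hEder.deriv, hW₀]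
    module
  have hP2 : P ^ 2 = σ * tF α ℓh nh s₀ := by
    rw [hPdef, Real.sq_sqrt (abs_nonneg _)]
    rcases hσ with rfl | rfl
    · rw [one_mul] at hσpos ⊢; exact abs_of_pos hσpos
    · rw [abs_of_neg (by nlinarith)]; ring
  have hσ0 : σ ≠ 0 := by rcases hσ with rfl | rfl <;> norm_num
  rw [hE']
  set T := 2 * ℓh s₀ * deriv α s₀ * deriv nh s₀
      + nh s₀ * (deriv α s₀ * deriv ℓh s₀ - ℓh s₀ * deriv (deriv α) s₀) with hTdef
  set C₁ := P⁻¹ * (deriv ℓh s₀ * nh s₀ ^ 2 + 2 * ℓh s₀ * nh s₀ * deriv nh s₀)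
      + -(σ * F' / (2 * P)) / P ^ 2 * (ℓh s₀ * nh s₀ ^ 2) with hC₁def
  set C₂ := P⁻¹ * (nh s₀ * deriv (deriv α) s₀)
      + -(σ * F' / (2 * P)) / P ^ 2 * (nh s₀ * deriv α s₀) with hC₂def
  have key1 : C₁ * (2 * P ^ 3) = σ * (2 * nh s₀ ^ 3 * (deriv α s₀ * T)) := by
    have expand : C₁ * (2 * P ^ 3)
        = P ^ 2 * (2 * (deriv ℓh s₀ * nh s₀ ^ 2 + 2 * ℓh s₀ * nh s₀ * deriv nh s₀))
          - (σ * F') * (ℓh s₀ * nh s₀ ^ 2) := by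
      rw [hC₁def]; field_simp; ring
    rw [expand, hP2, hFval, hF'def, hTdef]; ring
  have key2 : C₂ * (2 * P ^ 3) = σ * (2 * nh s₀ ^ 4 * (ℓh s₀ * T)) := by
    have expand : C₂ * (2 * P ^ 3)
        = P ^ 2 * (2 * (nh s₀ * deriv (deriv α) s₀))
          - (σ * F') * (nh s₀ * deriv α s₀) := by
      rw [hC₂def]; field_simp; ring
    rw [expand, hP2, hFval, hF'def, hTdef]; ring
  have hindep : ∀ c d : ℝ, c • γ s₀ + d • f₁ s₀ = 0 → c = 0 ∧ d = 0 := by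
    intro c d h
    have h1 : pdot (c • γ s₀ + d • f₁ s₀) (γ s₀) = 0 := by rw [h]; simp [pdot]
    have h2 : pdot (c • γ s₀ + d • f₁ s₀) (f₁ s₀) = 0 := by rw [h]; simp [pdot]
    rw [pdot_add_left, pdot_smul_left, pdot_smul_left] at h1 h2
    have hf₁γ : pdot (f₁ s₀) (γ s₀) = 0 := by rw [pdot_comm]; exact hg1
    rw [hgg, hf₁γ] at h1
    rw [hg1, h11] at h2
    constructor <;> linarith
  constructor
  · intro h
    obtain ⟨hc1, hc2⟩ := hindep _ _ h
    have h1 : σ * (2 * nh s₀ ^ 3 * (deriv α s₀ * T)) = 0 := by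
      rw [← key1, hc1, zero_mul]
    have h2 : σ * (2 * nh s₀ ^ 4 * (ℓh s₀ * T)) = 0 := by
      rw [← key2, hc2, zero_mul]
    have hn3 : (2 : ℝ) * nh s₀ ^ 3 ≠ 0 := mul_ne_zero two_ne_zero (pow_ne_zero 3 hn0)
    have hn4 : (2 : ℝ) * nh s₀ ^ 4 ≠ 0 := mul_ne_zero two_ne_zero (pow_ne_zero 4 hn0)
    have haT : deriv α s₀ * T = 0 := by
      rcases mul_eq_zero.mp h1 with h' | h'
      · exact absurd h' hσ0
      · rcases mul_eq_zero.mp h' with h'' | h''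
        · exact absurd h'' hn3
        · exact h''
    have hlT : ℓh s₀ * T = 0 := by
      rcases mul_eq_zero.mp h2 with h' | h'
      · exact absurd h' hσ0
      · rcases mul_eq_zero.mp h' with h'' | h''
        · exact absurd h'' hn4
        · exact h''
    by_contra hTne
    have ha0 : deriv α s₀ = 0 := by
      rcases mul_eq_zero.mp haT with h' | h'
      · exact h'
      · exact absurd h' hTne
    have hl0 : ℓh s₀ = 0 := by
      rcases mul_eq_zero.mp hlT with h' | h'
      · exact h'
      · exact absurd h' hTne
    apply hTne
    rw [hTdef, ha0, hl0]; ring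
  · intro hT0
    have hP3 : (2 : ℝ) * P ^ 3 ≠ 0 :=
      mul_ne_zero two_ne_zero (pow_ne_zero 3 hP0)
    have hc1 : C₁ = 0 := by
      have hz : C₁ * (2 * P ^ 3) = 0 := by rw [key1, hT0]; ring
      rcases mul_eq_zero.mp hz with h' | h'
      · exact h'
      · exact absurd h' hP3
    have hc2 : C₂ = 0 := by
      have hz : C₂ * (2 * P ^ 3) = 0 := by rw [key2, hT0]; ring
      rcases mul_eq_zero.mp hz with h' | h'
      · exact h'
      · exact absurd h' hP3
    rw [hc1, hc2]
    simp
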